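/- arXiv:2111.10095 — 4 statements merged into one kernel-verified Lean document; each statement's English description precedes it below -/
import Mathlib

section
/- Let E be a finite set, k ≥ 1, and let ξ₁,…,ξ_n be subsets of E with n ≥ 1. Suppose sets S₁,…,S_k ⊆ E are built greedily: initially all empty, and in step i the set ξ_i is added (by union) to a set S_j for which |S_j ∪ ξ_i| is minimal. Let B be a family of ⌈n/k⌉ of the sets ξ₁,…,ξ_n maximizing |⋃_{ξ∈B} ξ|. Then at every point during the greedy process, every S_j satisfies |S_j| ≤ |⋃_{ξ∈B} ξ|. -/
/-- The substream `S_j` obtained after the first `i` steps of the greedy process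
that assigns each set `ξ t` to the substream `g t`. -/
def greedyStream {α : Type} [DecidableEq α] {n k : ℕ} (ξ : Fin n → Finset α)
    (g : Fin n → Fin k) (i : ℕ) (j : Fin k) : Finset α :=
  (Finset.univ.filter fun t : Fin n => (t : ℕ) < i ∧ g t = j).biUnion ξ

private lemma nat_pigeon_aux (a b : ℕ) (hb : 0 < b) : a < (a/b+1)*b := by
  have h1 := Nat.div_add_mod a b
  have h2 := Nat.mod_lt a hb
  nlinarith [Nat.div_add_mod a b]

/-- Greedy upper bound (Lemma 4.2(2)): if each `ξ i` is added to a substream whose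
resulting size is minimal, then at every point during the process every substream
has size at most `|⋃_{ξ ∈ B} ξ|`, where `B` is a family of `⌈n/k⌉` of the sets
`ξ₁,…,ξ_n` whose union has maximal cardinality. -/
theorem greedy_size_le {α : Type} [DecidableEq α] (E : Finset α) (n k : ℕ)
    (hn : 0 < n) (hk : 0 < k)
    (ξ : Fin n → Finset α) (hξ : ∀ i, ξ i ⊆ E)
    (g : Fin n → Fin k)
    (hgreedy : ∀ i : Fin n, ∀ j : Fin k,
      (greedyStream ξ g i (g i) ∪ ξ i).card ≤ (greedyStream ξ g i j ∪ ξ i).card)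
    (B : Finset (Fin n)) (hB : B.card = (n + k - 1) / k)
    (hBmax : ∀ B' : Finset (Fin n), B'.card = (n + k - 1) / k →
      (B'.biUnion ξ).card ≤ (B.biUnion ξ).card) :
    ∀ (i : ℕ) (j : Fin k), (greedyStream ξ g i j).card ≤ (B.biUnion ξ).card := by
  -- key bound for one step
  have key : ∀ (i : ℕ) (h : i < n),
      (greedyStream ξ g i (g ⟨i, h⟩) ∪ ξ ⟨i, h⟩).card ≤ (B.biUnion ξ).card := by
    intro i h
    set ι : Fin n := ⟨i, h⟩
    -- counts per substream
    set cnt : Fin k → ℕ := fun j => (Finset.univ.filter fun t : Fin n => (t : ℕ) < i ∧ g t = j).card with hcnt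
    have hsum : ∑ j : Fin k, cnt j = (Finset.univ.filter fun t : Fin n => (t : ℕ) < i).card := by
      rw [Finset.card_eq_sum_card_fiberwise (f := g) (t := Finset.univ) (fun x _ => Finset.mem_univ _)]
      apply Finset.sum_congr rfl
      intro j _
      rw [Finset.filter_filter]
    have hle : (Finset.univ.filter fun t : Fin n => (t : ℕ) < i).card ≤ i := by
      have : (Finset.univ.filter fun t : Fin n => (t : ℕ) < i).card ≤ (Finset.range i).card := by
        apply Finset.card_le_card_of_injOn Fin.val
        · intro a ha
          simp at ha ⊢
          exact ha
        · intro a _ b _ hab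
          exact Fin.ext hab
      simpa using this
    -- pigeonhole: some substream has few sets
    have hex : ∃ j : Fin k, cnt j ≤ (n - 1) / k := by
      by_contra hc
      push_neg at hc
      have h1 : ∀ j : Fin k, (n - 1) / k + 1 ≤ cnt j := fun j => hc j
      have h2 : k * ((n - 1) / k + 1) ≤ ∑ j : Fin k, cnt j := by
        calc k * ((n - 1) / k + 1) = ∑ _j : Fin k, ((n - 1) / k + 1) := by
              simp [Finset.sum_const, mul_comm]
          _ ≤ ∑ j : Fin k, cnt j := Finset.sum_le_sum (fun j _ => h1 j)
      have h3 : (n - 1 : ℕ) < ((n-1)/k + 1) * k := nat_pigeon_aux (n-1) k hk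
      have h4 : ∑ j : Fin k, cnt j ≤ n - 1 := by
        rw [hsum]; omega
      nlinarith [h2, h3, h4]
    obtain ⟨j0, hj0⟩ := hex
    -- the set T of at most ⌈n/k⌉ indices
    set T : Finset (Fin n) := insert ι (Finset.univ.filter fun t : Fin n => (t : ℕ) < i ∧ g t = j0) with hT
    have hceil : (n + k - 1) / k = (n - 1) / k + 1 := by
      have : n + k - 1 = (n - 1) + k := by omega
      rw [this, Nat.add_div_right _ hk]
    have hTcard : T.card ≤ (n + k - 1) / k := by
      calc T.card ≤ cnt j0 + 1 := Finset.card_insert_le _ _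
        _ ≤ (n - 1) / k + 1 := by omega
        _ = (n + k - 1) / k := hceil.symm
    have hcn : (n + k - 1) / k ≤ n := by
      rw [Nat.div_le_iff_le_mul_add_pred hk]
      have : n ≤ k * n := Nat.le_mul_of_pos_left n hk
      omega
    obtain ⟨B', hTB', hB'card⟩ := Finset.exists_superset_card_eq hTcard (by simpa using hcn)
    -- S_{j0} ∪ ξ ι = T.biUnion ξ
    have hTu : greedyStream ξ g i j0 ∪ ξ ι = T.biUnion ξ := by
      rw [hT, Finset.biUnion_insert]
      rw [Finset.union_comm]
      rfl
    have hstep : (greedyStream ξ g i j0 ∪ ξ ι).card ≤ (B.biUnion ξ).card := by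
      rw [hTu]
      calc (T.biUnion ξ).card ≤ (B'.biUnion ξ).card :=
            Finset.card_le_card (Finset.biUnion_subset_biUnion_of_subset_left _ hTB')
        _ ≤ (B.biUnion ξ).card := hBmax B' hB'card
    exact le_trans (hgreedy ι j0) hstep
  intro i
  induction i with
  | zero =>
    intro j
    have : greedyStream ξ g 0 j = ∅ := by
      simp [greedyStream]
    simp [this]
  | succ i ih =>
    intro j
    by_cases h : i < n
    · set ι : Fin n := ⟨i, h⟩
      by_cases hg : g ι = j
      · have heq : greedyStream ξ g (i + 1) j = greedyStream ξ g i j ∪ ξ ι := by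
          apply Finset.ext
          intro a
          simp only [greedyStream, Finset.mem_biUnion, Finset.mem_filter, Finset.mem_univ,
            true_and, Finset.mem_union]
          constructor
          · rintro ⟨t, ⟨ht, htg⟩, hta⟩
            rcases Nat.lt_succ_iff_lt_or_eq.mp ht with h' | h'
            · exact Or.inl ⟨t, ⟨h', htg⟩, hta⟩
            · have : t = ι := Fin.ext h'
              subst this
              exact Or.inr hta
          · rintro (⟨t, ⟨ht, htg⟩, hta⟩ | ha)
            · exact ⟨t, ⟨Nat.lt_succ_of_lt ht, htg⟩, hta⟩
            · exact ⟨ι, ⟨Nat.lt_succ_self i, hg⟩, ha⟩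
        rw [heq, ← hg]
        exact key i h
      · have heq : greedyStream ξ g (i + 1) j = greedyStream ξ g i j := by
          apply Finset.ext
          intro a
          simp only [greedyStream, Finset.mem_biUnion, Finset.mem_filter, Finset.mem_univ,
            true_and]
          constructor
          · rintro ⟨t, ⟨ht, htg⟩, hta⟩
            rcases Nat.lt_succ_iff_lt_or_eq.mp ht with h' | h'
            · exact ⟨t, ⟨h', htg⟩, hta⟩
            · have ht' : t = ι := Fin.ext h'
              subst ht'
              exact absurd htg hg
          · rintro ⟨t, ⟨ht, htg⟩, hta⟩
            exact ⟨t, ⟨Nat.lt_succ_of_lt ht, htg⟩, hta⟩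
        rw [heq]
        exact ih j
    · have heq : greedyStream ξ g (i + 1) j = greedyStream ξ g i j := by
        unfold greedyStream
        congr 1
        apply Finset.filter_congr
        intro t _
        have : (t : ℕ) < n := t.isLt
        constructor <;> intro ⟨h1, h2⟩ <;> exact ⟨by omega, h2⟩
      rw [heq]
      exact ih j
end

section
/- Let E be a finite set of size m, k ≥ 1, and ξ₁,…,ξ_n ⊆ E with ⋃_i ξ_i = E. Let OPT be the minimum over all functions g:[n]→[k] of max_{j∈[k]} |⋃_{i: g(i)=j} ξ_i|, and let GREEDY be the maximum set size produced by the greedy assignment (each ξ_i added to the currently cheapest substream). Let B be a subfamily of {ξ₁,…,ξ_n} of cardinality ⌈n/k⌉ with |⋃_{ξ∈B} ξ| maximal, and set δ = m / |⋃_{ξ∈B} ξ|. Then GREEDY/OPT ≤ k/δ, equivalently GREEDY · m ≤ k · |⋃_{ξ∈B} ξ| · OPT. -/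
/-- Approximation ratio of greedy (Theorem 4.3): for any greedy assignment `g`
and any other assignment `g'` (in particular an optimal one),
`GREEDY · m ≤ k · |⋃_{ξ∈B} ξ| · OPT`, i.e. `GREEDY/OPT ≤ k/δ` with
`δ = m / |⋃_{ξ∈B} ξ|`, where `B` is a family of `⌈n/k⌉` of the sets `ξᵢ`
with union of maximal cardinality. -/
theorem greedy_approx_ratio {α : Type} [DecidableEq α] (E : Finset α) (n k : ℕ)
    (hn : 0 < n) (hk : 0 < k)
    (ξ : Fin n → Finset α) (hξ : ∀ i, ξ i ⊆ E)
    (hcov : ∀ e ∈ E, ∃ i, e ∈ ξ i)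
    (g : Fin n → Fin k)
    (hgreedy : ∀ i : Fin n, ∀ j : Fin k,
      (greedyStream ξ g i (g i) ∪ ξ i).card ≤ (greedyStream ξ g i j ∪ ξ i).card)
    (B : Finset (Fin n)) (hB : B.card = (n + k - 1) / k)
    (hBmax : ∀ B' : Finset (Fin n), B'.card = (n + k - 1) / k →
      (B'.biUnion ξ).card ≤ (B.biUnion ξ).card)
    (g' : Fin n → Fin k) :
    (Finset.univ.sup fun j : Fin k => (greedyStream ξ g n j).card) * E.card ≤
      k * (B.biUnion ξ).card *
        (Finset.univ.sup fun j : Fin k => (greedyStream ξ g' n j).card) := by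
  -- Part 1: m ≤ k * OPT
  have hm : E.card ≤ k * (Finset.univ.sup fun j : Fin k => (greedyStream ξ g' n j).card) := by
    have hsub : E ⊆ Finset.univ.biUnion (fun j : Fin k => greedyStream ξ g' n j) := by
      intro e he
      obtain ⟨i, hi⟩ := hcov e he
      refine Finset.mem_biUnion.2 ⟨g' i, Finset.mem_univ _, ?_⟩
      exact Finset.mem_biUnion.2 ⟨i, by simp [i.isLt], hi⟩
    calc E.card ≤ (Finset.univ.biUnion fun j : Fin k => greedyStream ξ g' n j).card :=
          Finset.card_le_card hsub
      _ ≤ ∑ j : Fin k, (greedyStream ξ g' n j).card := Finset.card_biUnion_le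
      _ ≤ k * (Finset.univ.sup fun j : Fin k => (greedyStream ξ g' n j).card) := by
          have := Finset.sum_le_card_nsmul Finset.univ
            (fun j : Fin k => (greedyStream ξ g' n j).card)
            (Finset.univ.sup fun j : Fin k => (greedyStream ξ g' n j).card)
            (fun j _ => Finset.le_sup (f := fun j : Fin k => (greedyStream ξ g' n j).card)
              (Finset.mem_univ j))
          simpa [Finset.card_univ, smul_eq_mul] using this
  -- Part 2: GREEDY ≤ |⋃_{ξ∈B} ξ|
  have hcNn : (n + k - 1) / k ≤ n := by
    have h1 : n ≤ n * k := Nat.le_mul_of_pos_right n hk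
    have h2 : (n + 1) * k = n * k + k := by ring
    have : n + k - 1 < (n + 1) * k := by omega
    exact Nat.lt_succ_iff.mp ((Nat.div_lt_iff_lt_mul hk).2 this)
  have hg : (Finset.univ.sup fun j : Fin k => (greedyStream ξ g n j).card) ≤
      (B.biUnion ξ).card := by
    apply Finset.sup_le
    intro j _
    by_cases hne : (Finset.univ.filter fun t : Fin n => g t = j).Nonempty
    · set S := Finset.univ.filter fun t : Fin n => g t = j with hS
      set i := S.max' hne with hi
      have hij : g i = j := (Finset.mem_filter.1 (S.max'_mem hne)).2
      -- the final stream j is contained in stream at step i (for g i) together with ξ i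
      have h1 : greedyStream ξ g n j ⊆ greedyStream ξ g (i : ℕ) (g i) ∪ ξ i := by
        intro e he
        obtain ⟨t, ht, hte⟩ := Finset.mem_biUnion.1 he
        have htf := Finset.mem_filter.1 ht
        have htS : t ∈ S := Finset.mem_filter.2 ⟨Finset.mem_univ _, htf.2.2⟩
        rcases lt_or_eq_of_le (S.le_max' t htS) with h | h
        · refine Finset.mem_union_left _ (Finset.mem_biUnion.2 ⟨t, ?_, hte⟩)
          exact Finset.mem_filter.2 ⟨Finset.mem_univ _, h, by rw [hij]; exact htf.2.2⟩
        · have he2 : e ∈ ξ (S.max' hne) := by rw [← h]; exact hte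
          exact Finset.mem_union_right _ he2
      -- pigeonhole: choose the substream j' with fewest assigned sets before step i
      obtain ⟨j', -, hj'⟩ := Finset.exists_min_image Finset.univ
        (fun j'' : Fin k =>
          (Finset.univ.filter fun t : Fin n => (t : ℕ) < (i : ℕ) ∧ g t = j'').card)
        ⟨j, Finset.mem_univ j⟩
      have hscard : (Finset.univ.filter fun t : Fin n => (t : ℕ) < (i : ℕ)).card ≤ (i : ℕ) := by
        have := Finset.card_le_card_of_injOn (fun t : Fin n => (t : ℕ))
          (s := Finset.univ.filter fun t : Fin n => (t : ℕ) < (i : ℕ))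
          (t := Finset.range (i : ℕ))
          (fun t ht => Finset.mem_range.2 (Finset.mem_filter.1 ht).2)
          (fun a _ b _ h => Fin.val_injective h)
        simpa using this
      have hsum : ∑ j'' : Fin k,
          (Finset.univ.filter fun t : Fin n => (t : ℕ) < (i : ℕ) ∧ g t = j'').card ≤ (i : ℕ) := by
        have hfib := Finset.card_eq_sum_card_fiberwise
          (s := Finset.univ.filter fun t : Fin n => (t : ℕ) < (i : ℕ))
          (t := Finset.univ) (f := g) (fun x _ => Finset.mem_univ _)
        have heq : ∀ j'' : Fin k,
            ((Finset.univ.filter fun t : Fin n => (t : ℕ) < (i : ℕ)).filter fun t => g t = j'')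
              = Finset.univ.filter fun t : Fin n => (t : ℕ) < (i : ℕ) ∧ g t = j'' := by
          intro j''; rw [Finset.filter_filter]
        calc ∑ j'' : Fin k,
              (Finset.univ.filter fun t : Fin n => (t : ℕ) < (i : ℕ) ∧ g t = j'').card
            = (Finset.univ.filter fun t : Fin n => (t : ℕ) < (i : ℕ)).card := by
              rw [hfib]; exact Finset.sum_congr rfl (fun j'' _ => by rw [heq j''])
          _ ≤ (i : ℕ) := hscard
      have hmin : (Finset.univ.filter fun t : Fin n =>
          (t : ℕ) < (i : ℕ) ∧ g t = j').card ≤ (i : ℕ) / k := by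
        rw [Nat.le_div_iff_mul_le hk, mul_comm]
        calc k * (Finset.univ.filter fun t : Fin n => (t : ℕ) < (i : ℕ) ∧ g t = j').card
            ≤ ∑ j'' : Fin k,
              (Finset.univ.filter fun t : Fin n => (t : ℕ) < (i : ℕ) ∧ g t = j'').card := by
              have := Finset.card_nsmul_le_sum Finset.univ
                (fun j'' : Fin k =>
                  (Finset.univ.filter fun t : Fin n => (t : ℕ) < (i : ℕ) ∧ g t = j'').card)
                ((Finset.univ.filter fun t : Fin n => (t : ℕ) < (i : ℕ) ∧ g t = j').card)
                (fun j'' hj'' => hj' j'' hj'')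
              simpa [Finset.card_univ, smul_eq_mul] using this
          _ ≤ (i : ℕ) := hsum
      -- the indices involved form a set of size ≤ ⌈n/k⌉
      have hTcard : ((Finset.univ.filter fun t : Fin n =>
          (t : ℕ) < (i : ℕ) ∧ g t = j') ∪ {i}).card ≤ (n + k - 1) / k := by
        calc ((Finset.univ.filter fun t : Fin n =>
              (t : ℕ) < (i : ℕ) ∧ g t = j') ∪ {i}).card
            ≤ (Finset.univ.filter fun t : Fin n =>
              (t : ℕ) < (i : ℕ) ∧ g t = j').card + 1 := by
              simpa using Finset.card_union_le
                (Finset.univ.filter fun t : Fin n => (t : ℕ) < (i : ℕ) ∧ g t = j') {i}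
          _ ≤ (i : ℕ) / k + 1 := by omega
          _ = ((i : ℕ) + k) / k := (Nat.add_div_right _ hk).symm
          _ ≤ (n + k - 1) / k := Nat.div_le_div_right (by have := i.isLt; omega)
      obtain ⟨B', hB'sub, -, hB'card⟩ := Finset.exists_subsuperset_card_eq
        (Finset.subset_univ _) hTcard (by simpa [Finset.card_univ] using hcNn)
      have hunion : greedyStream ξ g (i : ℕ) j' ∪ ξ i ⊆ B'.biUnion ξ := by
        intro e he
        rcases Finset.mem_union.1 he with h | h
        · obtain ⟨t, ht, hte⟩ := Finset.mem_biUnion.1 h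
          exact Finset.mem_biUnion.2 ⟨t, hB'sub (Finset.mem_union_left _ ht), hte⟩
        · exact Finset.mem_biUnion.2
            ⟨i, hB'sub (Finset.mem_union_right _ (Finset.mem_singleton_self i)), h⟩
      calc (greedyStream ξ g n j).card
          ≤ (greedyStream ξ g (i : ℕ) (g i) ∪ ξ i).card := Finset.card_le_card h1
        _ ≤ (greedyStream ξ g (i : ℕ) j' ∪ ξ i).card := hgreedy i j'
        _ ≤ (B'.biUnion ξ).card := Finset.card_le_card hunion
        _ ≤ (B.biUnion ξ).card := hBmax B' hB'card
    · have hempty : (Finset.univ.filter fun t : Fin n => (t : ℕ) < n ∧ g t = j) = ∅ := by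
        rw [Finset.filter_eq_empty_iff]
        intro t _ h
        exact hne ⟨t, Finset.mem_filter.2 ⟨Finset.mem_univ t, h.2⟩⟩
      rw [greedyStream, hempty]
      simp
  calc (Finset.univ.sup fun j : Fin k => (greedyStream ξ g n j).card) * E.card
      ≤ (B.biUnion ξ).card *
        (k * (Finset.univ.sup fun j : Fin k => (greedyStream ξ g' n j).card)) :=
        Nat.mul_le_mul hg hm
    _ = k * (B.biUnion ξ).card *
        (Finset.univ.sup fun j : Fin k => (greedyStream ξ g' n j).card) := by ring
end

section
/- Let π be a uniformly random permutation of a finite set U, let A, B ⊆ U be nonempty with |A ∪ B| ≥ h ≥ 1, and let s(X) denote the h smallest elements of π(X). Then the expected value of |s(A∪B) ∩ s(A) ∩ s(B)| / h equals |A ∩ B| / |A ∪ B|; equivalently, 1 − |s(A∪B) ∩ s(A) ∩ s(B)|/|s(A∪B)| is an unbiased estimator of the Jaccard distance 1 − |A∩B|/|A∪B|. -/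
/-- The bottom-`h` sketch of a finite set `X` in a linear order: the set of the
`min(h, |X|)` smallest elements of `X`. -/
def sketch {α : Type*} [LinearOrder α] (h : ℕ) (X : Finset α) : Finset α :=
  X.filter fun a => (X.filter fun b => b < a).card < h

/-!
Write `C = A ∪ B`. An element lies in all three sketches iff it lies in `π(A ∩ B)` and in
`s(π C)`, so the numerator counts pairs `(π, x)` with `x ∈ A ∩ B` and `π x ∈ s(π C)`.
Replacing `π` by `π ∘ swap x y` with `x, y ∈ C` fixes `π C` and sends `π x` to `π y`, so the
number of `π` selecting `x` is the same for every `x ∈ C`. Summing it over `C` counts every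
`π` exactly `|s(π C)| = h` times, so each of these counts is `h · |Perm U| / |C|`.
-/

open Finset

section Sketch

variable {α : Type*} [LinearOrder α] {h : ℕ} {X Y : Finset α} {a : α}

lemma mem_sketch : a ∈ sketch h X ↔ a ∈ X ∧ #{b ∈ X | b < a} < h :=
  mem_filter

lemma sketch_subset : sketch h X ⊆ X :=
  filter_subset _ X

lemma mem_sketch_of_subset (hYX : Y ⊆ X) (haY : a ∈ Y) (haX : a ∈ sketch h X) :
    a ∈ sketch h Y :=
  mem_sketch.2 ⟨haY, (card_le_card (filter_subset_filter _ hYX)).trans_lt (mem_sketch.1 haX).2⟩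

lemma strictMonoOn_card_filter_lt (X : Finset α) :
    StrictMonoOn (fun a => #{b ∈ X | b < a}) X := by
  intro a ha b _ hab
  refine card_lt_card ⟨monotone_filter_right _ fun c _ hc => hc.trans hab, fun hsub => ?_⟩
  simpa using hsub (mem_filter.2 ⟨ha, hab⟩)

lemma image_card_filter_lt (X : Finset α) :
    X.image (fun a => #{b ∈ X | b < a}) = range #X := by
  refine eq_of_subset_of_card_le (fun n hn => ?_) ?_
  · obtain ⟨a, ha, rfl⟩ := mem_image.1 hn
    exact mem_range.2 (card_lt_card ⟨filter_subset _ _, fun hsub => by simpa using hsub ha⟩)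
  · rw [card_range, card_image_of_injOn (strictMonoOn_card_filter_lt X).injOn]

lemma card_sketch (h : ℕ) (X : Finset α) : #(sketch h X) = min h #X := by
  have hinj := (strictMonoOn_card_filter_lt X).injOn.mono
    (filter_subset (fun a => #{b ∈ X | b < a} < h) X)
  rw [sketch, ← card_image_of_injOn hinj, ← filter_image (p := (· < h)), image_card_filter_lt]
  have : {n ∈ range #X | n < h} = range (min h #X) := by
    ext; simp only [mem_filter, mem_range]; omega
  rw [this, card_range]

lemma sketch_union_inter_sketch_inter_sketch [DecidableEq α] (X Y : Finset α) :
    sketch h (X ∪ Y) ∩ sketch h X ∩ sketch h Y = X ∩ Y ∩ sketch h (X ∪ Y) := by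
  ext a
  simp only [mem_inter]
  constructor
  · rintro ⟨⟨ha, haX⟩, haY⟩
    exact ⟨⟨(mem_sketch.1 haX).1, (mem_sketch.1 haY).1⟩, ha⟩
  · rintro ⟨⟨haX, haY⟩, ha⟩
    exact ⟨⟨ha, mem_sketch_of_subset subset_union_left haX ha⟩,
      mem_sketch_of_subset subset_union_right haY ha⟩

end Sketch

section Perm

open Equiv

variable {U : Type*} [DecidableEq U]

lemma Finset.image_swap_of_mem {C : Finset U} {x y : U} (hx : x ∈ C) (hy : y ∈ C) :
    C.image (swap x y) = C := by
  have := map_perm (s := C) (σ := swap x y) fun a ha => by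
    obtain ⟨-, rfl | rfl⟩ := swap_apply_ne_self_iff.1 ha <;> assumption
  rwa [map_eq_image] at this

lemma card_image_inter_eq_card_filter (π : Perm U) (D T : Finset U) :
    #(D.image π ∩ T) = #{x ∈ D | π x ∈ T} := by
  rw [← filter_mem_eq_inter, filter_image, card_image_of_injective _ π.injective]

variable [Fintype U] (S : Finset U → Finset U) (C : Finset U)

lemma card_filter_apply_mem_eq {x y : U} (hx : x ∈ C) (hy : y ∈ C) :
    #{π : Perm U | π x ∈ S (C.image π)} = #{π : Perm U | π y ∈ S (C.image π)} := by
  have hC : ∀ π : Perm U, C.image (π ∘ swap x y) = C.image π := fun π => by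
    rw [← image_image, C.image_swap_of_mem hx hy]
  refine card_nbij' (· * swap x y) (· * swap x y) ?_ ?_ ?_ ?_ <;> intro π <;>
    simp [hC, swap_apply_left, swap_apply_right, mul_assoc]

lemma sum_card_image_inter_eq_sum_card_filter (D : Finset U) :
    ∑ π : Perm U, #(D.image π ∩ S (C.image π)) =
      ∑ x ∈ D, #{π : Perm U | π x ∈ S (C.image π)} := by
  simp_rw [card_image_inter_eq_card_filter]
  exact sum_card_bipartiteAbove_eq_sum_card_bipartiteBelow _

theorem card_mul_sum_card_image_inter_eq {D : Finset U} (hDC : D ⊆ C) :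
    #C * ∑ π : Perm U, #(D.image π ∩ S (C.image π)) =
      #D * ∑ π : Perm U, #(C.image π ∩ S (C.image π)) := by
  obtain rfl | ⟨x₀, hx₀⟩ := C.eq_empty_or_nonempty
  · simp [subset_empty.1 hDC]
  have hconst : ∀ E ⊆ C, ∑ x ∈ E, #{π : Perm U | π x ∈ S (C.image π)} =
      #E * #{π : Perm U | π x₀ ∈ S (C.image π)} := fun E hEC =>
    sum_const_nat fun x hx => card_filter_apply_mem_eq S C (hEC hx) hx₀
  rw [sum_card_image_inter_eq_sum_card_filter, sum_card_image_inter_eq_sum_card_filter,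
    hconst D hDC, hconst C subset_rfl]
  ring

end Perm

theorem minhash_unbiased_general {U : Type*} [Fintype U] [LinearOrder U]
    (h : ℕ) (hh : 1 ≤ h) (A B : Finset U)
    (hcard : h ≤ (A ∪ B).card) :
    (∑ π : Equiv.Perm U,
        (((sketch h ((A ∪ B).image π) ∩ sketch h (A.image π) ∩
            sketch h (B.image π)).card : ℚ) / h)) /
      (Fintype.card (Equiv.Perm U) : ℚ) =
    ((A ∩ B).card : ℚ) / ((A ∪ B).card : ℚ) := by
  have hsketch : ∀ π : Equiv.Perm U, sketch h ((A ∪ B).image π) ∩ sketch h (A.image π) ∩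
      sketch h (B.image π) = (A ∩ B).image π ∩ sketch h ((A ∪ B).image π) := fun π => by
    rw [image_union, image_inter _ _ π.injective, sketch_union_inter_sketch_inter_sketch]
  have hfull : ∀ π : Equiv.Perm U, #((A ∪ B).image π ∩ sketch h ((A ∪ B).image π)) = h :=
    fun π => by
      rw [inter_eq_right.2 sketch_subset, card_sketch, card_image_of_injective _ π.injective,
        min_eq_left hcard]
  have hcount := card_mul_sum_card_image_inter_eq (sketch h) (A ∪ B) inter_subset_union
  simp only [hfull, sum_const, card_univ, smul_eq_mul] at hcount
  have hC : ((A ∪ B).card : ℚ) ≠ 0 := Nat.cast_ne_zero.2 (by omega)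
  have hh' : (h : ℚ) ≠ 0 := Nat.cast_ne_zero.2 (by omega)
  simp_rw [hsketch, ← sum_div]
  field_simp
  qify at hcount
  linear_combination hcount

/-- Unbiasedness of the min-hash Jaccard estimator (Broder 1997): averaging over
all permutations `π` of the ground set `U`, the expected value of
`|s(π(A∪B)) ∩ s(π(A)) ∩ s(π(B))| / h` equals `|A∩B| / |A∪B|`. -/
theorem minhash_unbiased {U : Type*} [Fintype U] [LinearOrder U]
    (h : ℕ) (hh : 1 ≤ h) (A B : Finset U) (hA : A.Nonempty) (hB : B.Nonempty)
    (hcard : h ≤ (A ∪ B).card) :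
    (∑ π : Equiv.Perm U,
        (((sketch h ((A ∪ B).image π) ∩ sketch h (A.image π) ∩
            sketch h (B.image π)).card : ℚ) / h)) /
      (Fintype.card (Equiv.Perm U) : ℚ) =
    ((A ∩ B).card : ℚ) / ((A ∪ B).card : ℚ) :=
  minhash_unbiased_general h hh A B hcard
end

section
/- Suppose each of n items with positive integer sizes w₁,…,w_n is assigned greedily to one of k bins, each item going to a bin whose resulting load is minimal. Then at termination the maximum bin load is at most the sum of the ⌈n/k⌉ largest item sizes. -/
/-- The load of bin `j` after the first `i` items have been assigned by `g`. -/
def loadAt {n k : ℕ} (w : Fin n → ℕ) (g : Fin n → Fin k) (i : ℕ) (j : Fin k) : ℕ :=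
  ∑ t ∈ Finset.univ.filter fun t : Fin n => (t : ℕ) < i ∧ g t = j, w t

/-- Greedy load balancing: if each of `n` items of positive sizes `w` is
assigned to a currently least-loaded of `k` bins, then at termination the
maximum bin load is at most the sum of the `⌈n/k⌉` largest item sizes
(expressed via a subset `B` of `⌈n/k⌉` items of maximal total size). -/
theorem greedy_load_balancing (n k : ℕ) (hk : 0 < k)
    (w : Fin n → ℕ) (hw : ∀ t, 0 < w t)
    (g : Fin n → Fin k)
    (hgreedy : ∀ i : Fin n, ∀ j : Fin k, loadAt w g i (g i) ≤ loadAt w g i j)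
    (B : Finset (Fin n)) (hB : B.card = (n + k - 1) / k)
    (hBmax : ∀ B' : Finset (Fin n), B'.card = (n + k - 1) / k →
      ∑ t ∈ B', w t ≤ ∑ t ∈ B, w t) :
    ∀ j : Fin k, loadAt w g n j ≤ ∑ t ∈ B, w t := by
  intro j
  set m := (n + k - 1) / k with hm
  by_cases hT : (Finset.univ.filter fun t : Fin n => g t = j).Nonempty
  case neg =>
    rw [Finset.not_nonempty_iff_eq_empty] at hT
    have h0 : loadAt w g n j = 0 := by
      apply Finset.sum_eq_zero
      intro t ht
      simp only [Finset.mem_filter, Finset.mem_univ, true_and] at ht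
      have : t ∈ (Finset.univ.filter fun t : Fin n => g t = j) := by
        simp [ht.2]
      rw [hT] at this
      exact absurd this (Finset.notMem_empty t)
    rw [h0]; exact Nat.zero_le _
  case pos =>
    set T := Finset.univ.filter fun t : Fin n => g t = j with hTdef
    set i : Fin n := T.max' hT with hi
    have hiT : i ∈ T := T.max'_mem hT
    have hgi : g i = j := (Finset.mem_filter.mp hiT).2
    have hle : ∀ t ∈ T, t ≤ i := fun t ht => T.le_max' t ht
    -- the fibers of the first i items
    set D : Fin k → Finset (Fin n) :=
      fun j' => Finset.univ.filter fun t : Fin n => (t : ℕ) < (i : ℕ) ∧ g t = j'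
      with hD
    have hloadD : ∀ j', loadAt w g (i : ℕ) j' = ∑ t ∈ D j', w t := fun _ => rfl
    -- final load of j equals w i plus the load just before i
    have hsplit : loadAt w g n j = w i + ∑ t ∈ D j, w t := by
      have hset : (Finset.univ.filter fun t : Fin n => (t : ℕ) < n ∧ g t = j)
          = insert i (D j) := by
        ext t
        simp only [hD, Finset.mem_filter, Finset.mem_univ, true_and, Finset.mem_insert]
        constructor
        · rintro ⟨-, hgt⟩
          have htT : t ∈ T := by simp [hTdef, hgt]
          rcases eq_or_lt_of_le (hle t htT) with h | h
          · exact Or.inl h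
          · exact Or.inr ⟨h, hgt⟩
        · rintro (rfl | ⟨hlt, hgt⟩)
          · exact ⟨Fin.is_lt _, hgi⟩
          · exact ⟨Fin.is_lt _, hgt⟩
      have hnotmem : i ∉ D j := by
        simp [hD]
      rw [loadAt, hset, Finset.sum_insert hnotmem]
    -- pigeonhole: some bin has few items among the first i
    have hsumcard : ∑ j' : Fin k, (D j').card ≤ (i : ℕ) := by
      have hcard : (Finset.univ.filter fun t : Fin n => (t : ℕ) < (i : ℕ)).card
          = ∑ j' : Fin k, ((Finset.univ.filter fun t : Fin n => (t : ℕ) < (i : ℕ)).filter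
              fun t => g t = j').card := by
        exact Finset.card_eq_sum_card_fiberwise (fun x _ => Finset.mem_univ (g x))
      have hfib : ∀ j', ((Finset.univ.filter fun t : Fin n => (t : ℕ) < (i : ℕ)).filter
          fun t => g t = j') = D j' := by
        intro j'; rw [Finset.filter_filter]
      have hle' : (Finset.univ.filter fun t : Fin n => (t : ℕ) < (i : ℕ)).card ≤ (i : ℕ) := by
        calc (Finset.univ.filter fun t : Fin n => (t : ℕ) < (i : ℕ)).card
            ≤ (Finset.range (i : ℕ)).card :=
              Finset.card_le_card_of_injOn (fun t : Fin n => (t : ℕ))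
                (fun t ht => Finset.mem_range.mpr (Finset.mem_filter.mp ht).2)
                (fun a _ b _ h => Fin.ext h)
          _ = (i : ℕ) := Finset.card_range _
      calc ∑ j' : Fin k, (D j').card
          = (Finset.univ.filter fun t : Fin n => (t : ℕ) < (i : ℕ)).card := by
            rw [hcard]; exact Finset.sum_congr rfl fun j' _ => by rw [hfib]
        _ ≤ (i : ℕ) := hle'
    obtain ⟨j1, hj1⟩ : ∃ j1 : Fin k, (D j1).card ≤ (i : ℕ) / k := by
      by_contra h
      push_neg at h
      have h1 : k * ((i : ℕ) / k + 1) ≤ ∑ j' : Fin k, (D j').card := by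
        calc k * ((i : ℕ) / k + 1) = ∑ _j' : Fin k, ((i : ℕ) / k + 1) := by
              simp [Finset.sum_const, mul_comm]
          _ ≤ ∑ j' : Fin k, (D j').card := Finset.sum_le_sum fun j' _ => h j'
      have h2 : k * ((i : ℕ) / k + 1) ≤ (i : ℕ) := le_trans h1 hsumcard
      have h3 : (i : ℕ) / k + 1 ≤ (i : ℕ) / k := by
        rw [Nat.le_div_iff_mul_le hk, mul_comm]
        exact h2
      exact Nat.not_succ_le_self _ h3
    -- greedy step
    have hgr : ∑ t ∈ D j, w t ≤ ∑ t ∈ D j1, w t := by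
      have := hgreedy i j1
      rw [hgi] at this
      rwa [hloadD, hloadD] at this
    -- the candidate set
    have hinotmem : i ∉ D j1 := by simp [hD]
    set C : Finset (Fin n) := insert i (D j1) with hC
    have hCsum : loadAt w g n j ≤ ∑ t ∈ C, w t := by
      rw [hsplit, hC, Finset.sum_insert hinotmem]
      exact Nat.add_le_add_left hgr _
    have hCcard : C.card ≤ m := by
      have h1 : C.card = (D j1).card + 1 := Finset.card_insert_of_notMem hinotmem
      have h2 : (i : ℕ) / k + 1 ≤ m := by
        have hin : (i : ℕ) < n := i.isLt
        have : (i : ℕ) / k + 1 = ((i : ℕ) + k) / k := by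
          rw [Nat.add_div_right _ hk]
        rw [this, hm]
        apply Nat.div_le_div_right
        omega
      omega
    have hmn : m ≤ n := by
      have hn1 : 1 ≤ n := Nat.one_le_iff_ne_zero.mpr (by
        rintro rfl; exact absurd i.isLt (Nat.not_lt_zero _))
      rw [hm]
      have hkn : n ≤ k * n := Nat.le_mul_of_pos_left n hk
      have : n + k - 1 ≤ k * n + (k - 1) := by omega
      calc (n + k - 1) / k ≤ (k * n + (k - 1)) / k := Nat.div_le_div_right this
        _ = n + (k - 1) / k := Nat.mul_add_div hk n (k - 1)
        _ = n := by rw [Nat.div_eq_of_lt (by omega)]; ring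
    obtain ⟨C', hCC', -, hC'card⟩ :=
      Finset.exists_subsuperset_card_eq (C.subset_univ) hCcard (by simpa using hmn)
    calc loadAt w g n j ≤ ∑ t ∈ C, w t := hCsum
      _ ≤ ∑ t ∈ C', w t := Finset.sum_le_sum_of_subset hCC'
      _ ≤ ∑ t ∈ B, w t := hBmax C' hC'card
end
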